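/- Let p be a prime, e ≥ 1, and let r : {1,…,e} → ℕ be a nonincreasing sequence of positive integers (r_i ≥ r_{i+1} ≥ 1). Define α = (1 + (p−1)∑_{i=1}^e p^{e−i} r_i)/p^e and, for 2 ≤ l ≤ p^e, ε(l) = α − (1 + ∑_{i=1}^e r_i w_i(l))/l where w_i(m) = ⌊(m-1)/p^{i-1}⌋ − ⌊(m-1)/p^i⌋. Then ε(l) ≥ 0 for all 2 ≤ l ≤ p^e. -/

import Mathlib

/-!
Clearing denominators, and using `wᵢ(pᵉ) = p^(e-i) (p - 1)`, the claim becomes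
`pᵉ (1 + ∑ rᵢ wᵢ(l)) ≤ l (1 + ∑ rᵢ wᵢ(pᵉ))`. Put `gᵢ = l wᵢ(pᵉ) - pᵉ wᵢ(l)`. The `wᵢ(m)` telescope,
`∑_{i ≤ k} wᵢ(m) = m - 1 - ⌊(m - 1)/pᵏ⌋`, so the partial sums of the `gᵢ` are
`G_k = pᵉ (1 + ⌊(l - 1)/pᵏ⌋) - l p^(e-k) ≥ 0` (because `l ≤ pᵏ (⌊(l - 1)/pᵏ⌋ + 1)`) and
`G_e = pᵉ - l`. Abel summation against the nonincreasing `rᵢ` then gives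
`∑ rᵢ gᵢ ≥ r_e G_e ≥ pᵉ - l`, which is the claim.
-/

/-- `w p i m = ⌊(m-1)/p^(i-1)⌋ - ⌊(m-1)/p^i⌋` (natural floor division). -/
def w (p i m : ℕ) : ℕ := (m - 1) / p ^ (i - 1) - (m - 1) / p ^ i

open Finset

theorem Nat.mul_sub_one_div_left {a b : ℕ} (ha : 0 < a) (hb : 0 < b) :
    (a * b - 1) / a = b - 1 := by
  obtain ⟨c, rfl⟩ : ∃ c, b = c + 1 := ⟨b - 1, by omega⟩
  have : a * (c + 1) - 1 = a * c + (a - 1) := by rw [mul_add_one]; omega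
  rw [this, Nat.mul_add_div ha, Nat.div_eq_of_lt (by omega)]
  simp

theorem Nat.pow_sub_one_div_pow {p e k : ℕ} (hp : 0 < p) (hk : k ≤ e) :
    (p ^ e - 1) / p ^ k = p ^ (e - k) - 1 := by
  rw [← pow_mul_pow_sub p hk]
  exact Nat.mul_sub_one_div_left (by positivity) (by positivity)

theorem w_pow {p e i : ℕ} (hp : 0 < p) (hi : 1 ≤ i) (hie : i ≤ e) :
    w p i (p ^ e) = p ^ (e - i) * (p - 1) := by
  have hsucc : e - (i - 1) = e - i + 1 := by omega
  rw [w, Nat.pow_sub_one_div_pow hp (by omega), Nat.pow_sub_one_div_pow hp hie, hsucc, pow_succ,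
    Nat.mul_sub_one]
  have hx : 0 < p ^ (e - i) := by positivity
  generalize p ^ (e - i) = x at hx ⊢
  have : x ≤ x * p := Nat.le_mul_of_pos_right _ hp
  omega

theorem sum_w_add_div_pow (p m k : ℕ) :
    ∑ i ∈ Icc 1 k, w p i m + (m - 1) / p ^ k = m - 1 := by
  induction k with
  | zero => simp
  | succ k ih =>
    have hdiv : (m - 1) / p ^ (k + 1) ≤ (m - 1) / p ^ k := by
      rw [pow_succ, ← Nat.div_div_eq_div_mul]
      exact Nat.div_le_self _ _
    rw [sum_Icc_succ_top (by omega), w, Nat.add_sub_cancel]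
    omega

theorem sum_w_of_le_pow {p e m : ℕ} (hm : m ≤ p ^ e) :
    ∑ i ∈ Icc 1 e, w p i m = m - 1 := by
  have h := sum_w_add_div_pow p m e
  rw [Nat.div_eq_zero_iff.2 (by omega)] at h
  simpa using h

theorem pow_mul_sum_w_le {p e k : ℕ} (hp : 0 < p) (hk : k ≤ e) (l : ℕ) :
    p ^ e * ∑ i ∈ Icc 1 k, w p i l ≤ l * ∑ i ∈ Icc 1 k, w p i (p ^ e) := by
  have hl := sum_w_add_div_pow p l k
  have hpe := sum_w_add_div_pow p (p ^ e) k
  rw [Nat.pow_sub_one_div_pow hp hk] at hpe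
  have hsplit := pow_mul_pow_sub p hk
  have hcover : l ≤ p ^ k * ((l - 1) / p ^ k + 1) := by
    have := Nat.lt_mul_div_succ (l - 1) (show 0 < p ^ k by positivity)
    omega
  have hpek : 0 < p ^ (e - k) := by positivity
  have hpe_pos : 0 < p ^ e := by positivity
  generalize ∑ i ∈ Icc 1 k, w p i l = A at hl ⊢
  generalize ∑ i ∈ Icc 1 k, w p i (p ^ e) = B at hpe ⊢
  generalize (l - 1) / p ^ k = q at hl hcover
  rcases Nat.eq_zero_or_pos l with rfl | hl0
  · simp [show A = 0 by omega]
  zify [show 1 ≤ p ^ e by omega, show 1 ≤ p ^ (e - k) by omega, hl0] at *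
  nlinarith [mul_le_mul_of_nonneg_left hcover hpek.le]

theorem mul_sum_Icc_le_sum_Icc_mul {R : Type*} [Semiring R] [PartialOrder R] [IsOrderedRing R]
    {c g : ℕ → R} {n : ℕ} (hc : ∀ i, 1 ≤ i → i < n → c (i + 1) ≤ c i)
    (hg : ∀ k < n, 0 ≤ ∑ i ∈ Icc 1 k, g i) :
    c n * ∑ i ∈ Icc 1 n, g i ≤ ∑ i ∈ Icc 1 n, c i * g i := by
  induction n with
  | zero => simp
  | succ n ih =>
    have ih := ih (fun i hi hin => hc i hi (by omega)) (fun k hk => hg k (by omega))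
    have hstep : c (n + 1) * ∑ i ∈ Icc 1 n, g i ≤ c n * ∑ i ∈ Icc 1 n, g i := by
      rcases Nat.eq_zero_or_pos n with rfl | hn
      · simp
      · exact mul_le_mul_of_nonneg_right (hc n hn (by omega)) (hg n (by omega))
    rw [sum_Icc_succ_top (by omega), sum_Icc_succ_top (by omega), mul_add]
    exact add_le_add_left (hstep.trans ih) _

theorem sub_one_mul_sum_pow_mul_eq_sum_mul_w {p : ℕ} (hp : 0 < p) (e : ℕ) (r : ℕ → ℕ) :
    ((p : ℚ) - 1) * ∑ i ∈ Icc 1 e, (p : ℚ) ^ (e - i) * r i =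
      ∑ i ∈ Icc 1 e, (r i : ℚ) * w p i (p ^ e) := by
  rw [mul_sum]
  refine sum_congr rfl fun i hi => ?_
  obtain ⟨hi1, hie⟩ := mem_Icc.1 hi
  rw [w_pow hp hi1 hie]
  push_cast [Nat.one_le_of_lt hp]
  ring

theorem one_add_sum_mul_w_mul_pow_le {p e l : ℕ} (hp : 0 < p) (r : ℕ → ℕ)
    (hmono : ∀ i, 1 ≤ i → i < e → r (i + 1) ≤ r i) (hre : 1 ≤ r e) (hl : 1 ≤ l)
    (hle : l ≤ p ^ e) :
    (1 + ∑ i ∈ Icc 1 e, (r i : ℚ) * w p i l) * (p : ℚ) ^ e ≤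
      (1 + ∑ i ∈ Icc 1 e, (r i : ℚ) * w p i (p ^ e)) * l := by
  set g : ℕ → ℚ := fun i => l * w p i (p ^ e) - (p : ℚ) ^ e * w p i l
  have hg : ∀ k ≤ e, 0 ≤ ∑ i ∈ Icc 1 k, g i := by
    intro k hk
    simp only [g, sum_sub_distrib, ← mul_sum, sub_nonneg]
    exact_mod_cast pow_mul_sum_w_le hp hk l
  have hge : ∑ i ∈ Icc 1 e, g i = (p : ℚ) ^ e - l := by
    simp only [g, sum_sub_distrib, ← mul_sum]
    rw [← Nat.cast_sum, ← Nat.cast_sum, sum_w_of_le_pow hle, sum_w_of_le_pow le_rfl]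
    push_cast [hl, Nat.one_le_pow _ _ hp]
    ring
  have habel := mul_sum_Icc_le_sum_Icc_mul (c := fun i => (r i : ℚ)) (g := g)
    (fun i hi hie => by exact_mod_cast hmono i hi hie) (fun k hk => hg k hk.le)
  have hsum : ∑ i ∈ Icc 1 e, (r i : ℚ) * g i =
      l * ∑ i ∈ Icc 1 e, (r i : ℚ) * w p i (p ^ e) -
        (p : ℚ) ^ e * ∑ i ∈ Icc 1 e, (r i : ℚ) * w p i l := by
    simp only [g, mul_sum, ← sum_sub_distrib]
    exact sum_congr rfl fun i _ => by ring
  rw [hge, hsum] at habel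
  have hgap : (0 : ℚ) ≤ (p : ℚ) ^ e - l := by
    rw [sub_nonneg]; exact_mod_cast hle
  have hre' : (1 : ℚ) ≤ r e := by exact_mod_cast hre
  nlinarith [mul_le_mul_of_nonneg_right hre' hgap]

theorem stmt4_general (p e : ℕ) (r : ℕ → ℕ)
    (hmono : ∀ i, 1 ≤ i → i < e → r (i + 1) ≤ r i)
    (hpos : ∀ i ∈ Finset.Icc 1 e, 1 ≤ r i) :
    ∀ l, 2 ≤ l → l ≤ p ^ e →
      0 ≤ (1 + ((p : ℚ) - 1) * ∑ i ∈ Finset.Icc 1 e, (p : ℚ) ^ (e - i) * (r i : ℚ)) / (p : ℚ) ^ e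
          - (1 + ∑ i ∈ Finset.Icc 1 e, (r i : ℚ) * (w p i l : ℚ)) / (l : ℚ) := by
  intro l hl hle
  have he : 1 ≤ e := Nat.one_le_iff_ne_zero.2 (by rintro rfl; simp at hle; omega)
  have hp : 0 < p := (Nat.pow_pos_iff.1 (by omega : 0 < p ^ e)).resolve_right (by omega)
  rw [sub_nonneg, div_le_div_iff₀ (by positivity) (by positivity),
    sub_one_mul_sum_pow_mul_eq_sum_mul_w hp]
  exact one_add_sum_mul_w_mul_pow_le hp r hmono (hpos e (mem_Icc.2 ⟨he, le_rfl⟩)) (by omega) hle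

theorem stmt4 (p e : ℕ) (hp : p.Prime) (he : 1 ≤ e) (r : ℕ → ℕ)
    (hmono : ∀ i, 1 ≤ i → i < e → r (i + 1) ≤ r i)
    (hpos : ∀ i ∈ Finset.Icc 1 e, 1 ≤ r i) :
    ∀ l, 2 ≤ l → l ≤ p ^ e →
      0 ≤ (1 + ((p : ℚ) - 1) * ∑ i ∈ Finset.Icc 1 e, (p : ℚ) ^ (e - i) * (r i : ℚ)) / (p : ℚ) ^ e
          - (1 + ∑ i ∈ Finset.Icc 1 e, (r i : ℚ) * (w p i l : ℚ)) / (l : ℚ) :=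
  stmt4_general p e r hmono hpos
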